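/- On a (2,1)-stable instance of Uniform Metric Labeling, the LP relaxation is tight: its optimal value equals the optimal integer objective Q(g), and the integer solution corresponding to g is an optimal LP solution; moreover every optimal LP solution is integral. -/

import Mathlib

open Finset

variable {V L : Type*}

/-- `x` is a probability vector over the labels `L`. -/
def IsProbVec [Fintype L] (x : L → ℝ) : Prop :=
  (∀ i, 0 ≤ x i) ∧ ∑ i, x i = 1

/-- Half the ℓ₁ distance between two label vectors. -/
noncomputable def dL1 [Fintype L] (x y : L → ℝ) : ℝ :=
  (1 / 2) * ∑ i, |x i - y i|

/-- The LP relaxation objective of Uniform Metric Labeling. -/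
noncomputable def QLP [Fintype V] [Fintype L] (E : Finset (V × V))
    (c : V → L → ℝ) (w : V × V → ℝ) (μ : V → L → ℝ) : ℝ :=
  ∑ u, ∑ i, c u i * μ u i + ∑ e ∈ E, w e * dL1 (μ e.1) (μ e.2)

/-- The Uniform Metric Labeling objective. -/
def Q [Fintype V] [DecidableEq L] (E : Finset (V × V)) (c : V → L → ℝ)
    (w : V × V → ℝ) (g : V → L) : ℝ :=
  ∑ u, c u (g u) + ∑ e ∈ E.filter (fun e => g e.1 ≠ g e.2), w e

/-- The integer LP solution corresponding to a labeling `f`. -/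
def toVec [DecidableEq L] (f : V → L) : V → L → ℝ :=
  fun u i => if f u = i then 1 else 0

/-- `w'` is a `(β,γ)`-perturbation of `w` on edge set `E`. -/
def IsPerturbation (E : Finset (V × V)) (β γ : ℝ) (w w' : V × V → ℝ) : Prop :=
  ∀ e ∈ E, w e / β ≤ w' e ∧ w' e ≤ γ * w e

/-- `(β,γ)`-stability: `g` is the unique optimum under every `(β,γ)`-perturbation. -/
def IsStable [Fintype V] [DecidableEq L] (E : Finset (V × V)) (c : V → L → ℝ)
    (w : V × V → ℝ) (β γ : ℝ) (g : V → L) : Prop :=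
  ∀ w', IsPerturbation E β γ w w' → ∀ h : V → L, h ≠ g → Q E c w' g < Q E c w' h
/-!
Fix an LP solution `μ`. For a label `i` and a threshold `θ ∈ [0, 1]`, move every vertex `u` with
`θ ≤ μ u i` to label `i` and keep `g` elsewhere. Compare the resulting labeling `h` with `g` under
the `(2,1)`-perturbation that halves exactly the edges cut by `h` but not by `g`: stability makes
this margin positive whenever `h ≠ g`. The margin is bounded above by a step function of `θ`, and
integrating these bounds over `θ` and summing over `i` gives exactly `QLP μ - Q g`. Hence
`QLP μ ≥ Q g`. If some `μ u i` with `i ≠ g u` is positive, the relabeling differs from `g` for all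
`θ ≤ μ u i`, so the bound for `i` has integral at least `δ * μ u i`, where `δ > 0` is the least
margin over the finitely many labelings `h ≠ g`; hence `QLP μ > Q g`.
-/

open MeasureTheory

section ProbVec

variable [Fintype L] {x y : L → ℝ}

lemma IsProbVec.le_one (hx : IsProbVec x) (i : L) : x i ≤ 1 :=
  hx.2 ▸ Finset.single_le_sum (fun j _ => hx.1 j) (Finset.mem_univ i)

lemma IsProbVec.eq_one_of_forall_ne (hx : IsProbVec x) {j : L} (h : ∀ i ≠ j, x i = 0) :
    x j = 1 :=
  hx.2 ▸ (Finset.sum_eq_single j (fun i _ hi => h i hi) (by simp)).symm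

lemma IsProbVec.sum_abs_sub (hx : IsProbVec x) (hy : IsProbVec y) (t : ℝ) :
    ∑ i, (|x i - y i| / 2 - t * (x i + y i) / 2) = dL1 x y - t := by
  have : ∑ i, t * (x i + y i) / 2 = t * (∑ i, x i + ∑ i, y i) / 2 := by
    rw [← Finset.sum_div, ← Finset.mul_sum, Finset.sum_add_distrib]
  rw [Finset.sum_sub_distrib, ← Finset.sum_div, this, hx.2, hy.2, dL1]
  ring

end ProbVec

noncomputable section

namespace UniformMetricLabeling

def step (a θ : ℝ) : ℝ := if θ ≤ a then 1 else 0

lemma intervalIntegrable_step (a : ℝ) : IntervalIntegrable (step a) volume 0 1 := by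
  refine Antitone.intervalIntegrable fun x y hxy => ?_
  unfold step
  split_ifs <;> linarith

lemma integral_step {a : ℝ} (h0 : 0 ≤ a) (h1 : a ≤ 1) :
    ∫ θ in (0 : ℝ)..1, step a θ = a := by
  have : step a = {θ | θ ≤ a}.indicator 1 := by
    funext θ
    simp [step, Set.indicator]
  rw [this, intervalIntegral.integral_indicator (Set.mem_Icc.2 ⟨h0, h1⟩)]
  simp

lemma intervalIntegrable_sum_mul {ι : Type*} (s : Finset ι) (a : ι → ℝ) {f : ι → ℝ → ℝ}
    (hf : ∀ k ∈ s, IntervalIntegrable (f k) volume 0 1) :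
    IntervalIntegrable (fun θ => ∑ k ∈ s, a k * f k θ) volume 0 1 := by
  simpa only [Finset.sum_fn] using
    IntervalIntegrable.sum s fun k hk => (hf k hk).const_mul (a k)

section Labeling

variable [DecidableEq L]

def cut (f : V → L) (e : V × V) : ℝ := if f e.1 = f e.2 then 0 else 1

lemma dL1_toVec [Fintype L] (f : V → L) (e : V × V) :
    dL1 (toVec f e.1) (toVec f e.2) = cut f e := by
  by_cases he : f e.1 = f e.2
  · simp [dL1, cut, toVec, he]
  · have : ∀ i, |toVec f e.1 i - toVec f e.2 i| =
        (if f e.1 = i then 1 else 0) + (if f e.2 = i then 1 else 0) := fun i => by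
      unfold toVec
      split_ifs <;> simp_all
    simp only [dL1, cut, he, this, Finset.sum_add_distrib, Finset.sum_ite_eq, Finset.mem_univ]
    norm_num

def adversarialWeight (w : V × V → ℝ) (g h : V → L) (e : V × V) : ℝ :=
  if g e.1 = g e.2 ∧ h e.1 ≠ h e.2 then w e / 2 else w e

lemma isPerturbation_adversarialWeight {E : Finset (V × V)} {w : V × V → ℝ}
    (hw : ∀ e ∈ E, 0 ≤ w e) (g h : V → L) :
    IsPerturbation E 2 1 w (adversarialWeight w g h) := by
  intro e he
  have := hw e he
  unfold adversarialWeight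
  split_ifs <;> constructor <;> linarith

variable [Fintype V]

lemma Q_eq_sum_cut (E : Finset (V × V)) (c : V → L → ℝ) (w : V × V → ℝ) (f : V → L) :
    Q E c w f = ∑ u, c u (f u) + ∑ e ∈ E, w e * cut f e := by
  simp [Q, cut, Finset.sum_filter]

lemma QLP_toVec [Fintype L] (E : Finset (V × V)) (c : V → L → ℝ) (w : V × V → ℝ)
    (f : V → L) : QLP E c w (toVec f) = Q E c w f := by
  simp [QLP, Q_eq_sum_cut, dL1_toVec, toVec]

def margin (E : Finset (V × V)) (c : V → L → ℝ) (w : V × V → ℝ) (g h : V → L) : ℝ :=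
  Q E c (adversarialWeight w g h) h - Q E c (adversarialWeight w g h) g

variable {E : Finset (V × V)} {c : V → L → ℝ} {w : V × V → ℝ} {g : V → L}

lemma margin_pos (hw : ∀ e ∈ E, 0 ≤ w e) (hstable : IsStable E c w 2 1 g) {h : V → L}
    (hne : h ≠ g) : 0 < margin E c w g h :=
  sub_pos.2 (hstable _ (isPerturbation_adversarialWeight hw g h) h hne)

lemma margin_nonneg (hw : ∀ e ∈ E, 0 ≤ w e) (hstable : IsStable E c w 2 1 g) (h : V → L) :
    0 ≤ margin E c w g h := by
  rcases eq_or_ne h g with rfl | hne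
  · exact (sub_self _).ge
  · exact (margin_pos hw hstable hne).le

lemma exists_pos_le_margin [Fintype L] (hw : ∀ e ∈ E, 0 ≤ w e)
    (hstable : IsStable E c w 2 1 g) : ∃ δ > 0, ∀ h ≠ g, δ ≤ margin E c w g h := by
  classical
  let S := insert 1 ((Finset.univ.filter (· ≠ g)).image (margin E c w g))
  have hS : S.Nonempty := Finset.insert_nonempty _ _
  refine ⟨S.min' hS, ?_, fun h hne => S.min'_le _ ?_⟩
  · refine (Finset.lt_min'_iff S hS).2 fun x hx => ?_
    rcases Finset.mem_insert.1 hx with rfl | hx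
    · exact one_pos
    · obtain ⟨h, hh, rfl⟩ := Finset.mem_image.1 hx
      exact margin_pos hw hstable (Finset.mem_filter.1 hh).2
  · exact Finset.mem_insert_of_mem (Finset.mem_image_of_mem _ (by simpa using hne))

end Labeling

section Rounding

def relabel (g : V → L) (μ : V → L → ℝ) (i : L) (θ : ℝ) (u : V) : L :=
  if θ ≤ μ u i then i else g u

lemma cost_relabel_sub (c : V → L → ℝ) (g : V → L) (μ : V → L → ℝ) (i : L) (θ : ℝ) (u : V) :
    c u (relabel g μ i θ u) - c u (g u) = (c u i - c u (g u)) * step (μ u i) θ := by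
  unfold relabel step
  split_ifs <;> ring

variable [DecidableEq L]

def edgeBound (g : V → L) (μ : V → L → ℝ) (i : L) (e : V × V) (θ : ℝ) : ℝ :=
  (1 / 2) * (step (max (μ e.1 i) (μ e.2 i)) θ - step (min (μ e.1 i) (μ e.2 i)) θ) -
    (cut g e / 2) * (step (μ e.1 i) θ + step (μ e.2 i) θ)

/-- If `g` does not cut `e`, the relabeling cuts it exactly when `θ` lies between the two masses
of `i`, at the halved weight; if `g` cuts `e`, the relabeling uncuts it at least when `θ` is below
both masses. -/
lemma adversarialWeight_mul_cut_relabel_sub_le {w : V × V → ℝ} {e : V × V} (hwe : 0 ≤ w e)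
    (g : V → L) (μ : V → L → ℝ) (i : L) (θ : ℝ) :
    adversarialWeight w g (relabel g μ i θ) e * (cut (relabel g μ i θ) e - cut g e) ≤
      w e * edgeBound g μ i e θ := by
  obtain ⟨a, b⟩ := e
  simp only [adversarialWeight, cut, edgeBound, relabel, step, le_max_iff, le_min_iff]
  split_ifs <;> grind

lemma intervalIntegrable_edgeBound (g : V → L) (μ : V → L → ℝ) (i : L) (e : V × V) :
    IntervalIntegrable (edgeBound g μ i e) volume 0 1 :=
  (((intervalIntegrable_step _).sub (intervalIntegrable_step _)).const_mul _).sub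
    (((intervalIntegrable_step _).add (intervalIntegrable_step _)).const_mul _)

lemma integral_edgeBound [Fintype L] (g : V → L) {μ : V → L → ℝ}
    (hμ : ∀ u, IsProbVec (μ u)) (i : L) (e : V × V) :
    ∫ θ in (0 : ℝ)..1, edgeBound g μ i e θ =
      |μ e.1 i - μ e.2 i| / 2 - cut g e * (μ e.1 i + μ e.2 i) / 2 := by
  have ha := (hμ e.1).1 i
  have hb := (hμ e.2).1 i
  have ha' := (hμ e.1).le_one i
  have hb' := (hμ e.2).le_one i
  simp only [edgeBound]
  rw [intervalIntegral.integral_sub, intervalIntegral.integral_const_mul,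
    intervalIntegral.integral_const_mul, intervalIntegral.integral_sub,
    intervalIntegral.integral_add, integral_step ha ha', integral_step hb hb',
    integral_step (le_max_of_le_left ha) (max_le ha' hb'),
    integral_step (le_min ha hb) (min_le_of_left_le ha'), max_sub_min_eq_abs']
  · ring
  all_goals first
    | exact intervalIntegrable_step _
    | exact (((intervalIntegrable_step _).sub (intervalIntegrable_step _)).const_mul _)
    | exact (((intervalIntegrable_step _).add (intervalIntegrable_step _)).const_mul _)

variable [Fintype V]

def marginBound (E : Finset (V × V)) (c : V → L → ℝ) (w : V × V → ℝ) (g : V → L)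
    (μ : V → L → ℝ) (i : L) (θ : ℝ) : ℝ :=
  ∑ u, (c u i - c u (g u)) * step (μ u i) θ + ∑ e ∈ E, w e * edgeBound g μ i e θ

variable {E : Finset (V × V)} {c : V → L → ℝ} {w : V × V → ℝ} {g : V → L} {μ : V → L → ℝ}

lemma margin_relabel_le (hw : ∀ e ∈ E, 0 ≤ w e) (i : L) (θ : ℝ) :
    margin E c w g (relabel g μ i θ) ≤ marginBound E c w g μ i θ := by
  set h := relabel g μ i θ
  have hsplit : margin E c w g h = ∑ u, (c u (h u) - c u (g u)) +
      ∑ e ∈ E, adversarialWeight w g h e * (cut h e - cut g e) := by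
    simp only [margin, Q_eq_sum_cut, Finset.sum_sub_distrib, mul_sub]
    ring
  rw [hsplit, marginBound]
  exact add_le_add (Finset.sum_congr rfl fun u _ => cost_relabel_sub c g μ i θ u).le
    (Finset.sum_le_sum fun e he => adversarialWeight_mul_cut_relabel_sub_le (hw e he) g μ i θ)

lemma intervalIntegrable_marginBound (i : L) :
    IntervalIntegrable (marginBound E c w g μ i) volume 0 1 :=
  (intervalIntegrable_sum_mul _ _ fun u _ => intervalIntegrable_step (μ u i)).add
    (intervalIntegrable_sum_mul _ _ fun e _ => intervalIntegrable_edgeBound g μ i e)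

lemma integral_marginBound [Fintype L] (hμ : ∀ u, IsProbVec (μ u)) (i : L) :
    ∫ θ in (0 : ℝ)..1, marginBound E c w g μ i θ =
      ∑ u, (c u i - c u (g u)) * μ u i +
        ∑ e ∈ E, w e * (|μ e.1 i - μ e.2 i| / 2 - cut g e * (μ e.1 i + μ e.2 i) / 2) := by
  simp only [marginBound]
  rw [intervalIntegral.integral_add
      (intervalIntegrable_sum_mul _ _ fun u _ => intervalIntegrable_step (μ u i))
      (intervalIntegrable_sum_mul _ _ fun e _ => intervalIntegrable_edgeBound g μ i e),
    intervalIntegral.integral_finsetSum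
      fun u _ => (intervalIntegrable_step (μ u i)).const_mul _,
    intervalIntegral.integral_finsetSum
      fun e _ => (intervalIntegrable_edgeBound g μ i e).const_mul _]
  congr 1 <;> refine Finset.sum_congr rfl fun _ _ => ?_ <;>
    rw [intervalIntegral.integral_const_mul]
  · rw [integral_step ((hμ _).1 i) ((hμ _).le_one i)]
  · rw [integral_edgeBound g hμ]

lemma sum_integral_marginBound [Fintype L] (hμ : ∀ u, IsProbVec (μ u)) :
    ∑ i, ∫ θ in (0 : ℝ)..1, marginBound E c w g μ i θ = QLP E c w μ - Q E c w g := by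
  have hnode : ∀ u, ∑ i, (c u i - c u (g u)) * μ u i = ∑ i, c u i * μ u i - c u (g u) := by
    intro u
    simp only [sub_mul, Finset.sum_sub_distrib, ← Finset.mul_sum, (hμ u).2, mul_one]
  have hedge : ∀ e, ∑ i, w e * (|μ e.1 i - μ e.2 i| / 2 - cut g e * (μ e.1 i + μ e.2 i) / 2) =
      w e * dL1 (μ e.1) (μ e.2) - w e * cut g e := by
    intro e
    rw [← Finset.mul_sum, (hμ e.1).sum_abs_sub (hμ e.2), mul_sub]
  simp only [integral_marginBound hμ, Finset.sum_add_distrib]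
  rw [Finset.sum_comm, Finset.sum_comm (s := Finset.univ) (t := E)]
  simp only [hnode, hedge, Finset.sum_sub_distrib, QLP, Q_eq_sum_cut]
  ring

lemma integral_marginBound_nonneg (hw : ∀ e ∈ E, 0 ≤ w e) (hstable : IsStable E c w 2 1 g)
    (i : L) : 0 ≤ ∫ θ in (0 : ℝ)..1, marginBound E c w g μ i θ :=
  intervalIntegral.integral_nonneg zero_le_one fun θ _ =>
    (margin_nonneg hw hstable _).trans (margin_relabel_le hw i θ)

lemma mul_le_integral_marginBound [Fintype L] (hw : ∀ e ∈ E, 0 ≤ w e)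
    (hstable : IsStable E c w 2 1 g) (hμ : ∀ u, IsProbVec (μ u)) {δ : ℝ}
    (hδ : ∀ h ≠ g, δ ≤ margin E c w g h) {u : V} {i : L} (hi : i ≠ g u) :
    δ * μ u i ≤ ∫ θ in (0 : ℝ)..1, marginBound E c w g μ i θ := by
  have hpoint : ∀ θ, δ * step (μ u i) θ ≤ margin E c w g (relabel g μ i θ) := fun θ => by
    unfold step
    split_ifs with hθ
    · refine (mul_one δ).trans_le (hδ _ fun heq => hi ?_)
      rw [← congrFun heq u, relabel, if_pos hθ]
    · exact (mul_zero δ).trans_le (margin_nonneg hw hstable _)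
  calc δ * μ u i = ∫ θ in (0 : ℝ)..1, δ * step (μ u i) θ := by
        rw [intervalIntegral.integral_const_mul, integral_step ((hμ u).1 i) ((hμ u).le_one i)]
    _ ≤ ∫ θ in (0 : ℝ)..1, marginBound E c w g μ i θ :=
        intervalIntegral.integral_mono_on zero_le_one
          ((intervalIntegrable_step _).const_mul δ) (intervalIntegrable_marginBound i)
          fun θ _ => (hpoint θ).trans (margin_relabel_le hw i θ)

lemma Q_le_QLP [Fintype L] (hw : ∀ e ∈ E, 0 ≤ w e) (hstable : IsStable E c w 2 1 g)
    (hμ : ∀ u, IsProbVec (μ u)) : Q E c w g ≤ QLP E c w μ :=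
  sub_nonneg.1 <| sum_integral_marginBound hμ ▸
    Finset.sum_nonneg fun i _ => integral_marginBound_nonneg hw hstable i

lemma eq_zero_of_QLP_eq_Q [Fintype L] (hw : ∀ e ∈ E, 0 ≤ w e)
    (hstable : IsStable E c w 2 1 g) (hμ : ∀ u, IsProbVec (μ u))
    (hopt : QLP E c w μ = Q E c w g) (u : V) {i : L} (hi : i ≠ g u) : μ u i = 0 := by
  obtain ⟨δ, hδ0, hδ⟩ := exists_pos_le_margin hw hstable
  have hint : ∫ θ in (0 : ℝ)..1, marginBound E c w g μ i θ ≤ 0 := by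
    calc _ ≤ ∑ j, ∫ θ in (0 : ℝ)..1, marginBound E c w g μ j θ :=
          Finset.single_le_sum (fun j _ => integral_marginBound_nonneg hw hstable j)
            (Finset.mem_univ i)
      _ = 0 := by rw [sum_integral_marginBound hμ, hopt, sub_self]
  exact le_antisymm
    (nonpos_of_mul_nonpos_right ((mul_le_integral_marginBound hw hstable hμ hδ hi).trans hint)
      hδ0)
    ((hμ u).1 i)

end Rounding

end UniformMetricLabeling

end

open UniformMetricLabeling in
theorem lp_tight_of_two_one_stable_general [Fintype V] [Fintype L] [DecidableEq L]
    (E : Finset (V × V)) (c : V → L → ℝ) (w : V × V → ℝ)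
    (hw : ∀ e ∈ E, 0 ≤ w e)
    (g : V → L) (hstable : IsStable E c w 2 1 g) :
    QLP E c w (toVec g) = Q E c w g ∧
    (∀ μ : V → L → ℝ, (∀ u, IsProbVec (μ u)) → QLP E c w (toVec g) ≤ QLP E c w μ) ∧
    (∀ μ : V → L → ℝ, (∀ u, IsProbVec (μ u)) → QLP E c w μ = QLP E c w (toVec g) →
      ∀ u, ∀ i, μ u i = 0 ∨ μ u i = 1) := by
  rw [QLP_toVec]
  refine ⟨rfl, fun μ hμ => Q_le_QLP hw hstable hμ, fun μ hμ hopt u i => ?_⟩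
  have hzero : ∀ j ≠ g u, μ u j = 0 := fun j hj => eq_zero_of_QLP_eq_Q hw hstable hμ hopt u hj
  rcases eq_or_ne i (g u) with rfl | hi
  · exact Or.inr ((hμ u).eq_one_of_forall_ne hzero)
  · exact Or.inl (hzero i hi)

/-- On a `(2,1)`-stable instance the LP relaxation is tight: the integer solution
corresponding to the optimal labeling `g` is an optimal LP solution with value
`Q(g)`, and every optimal LP solution is integral. -/
theorem lp_tight_of_two_one_stable [Fintype V] [Fintype L] [DecidableEq L]
    (E : Finset (V × V)) (c : V → L → ℝ) (w : V × V → ℝ)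
    (hc : ∀ u i, 0 ≤ c u i) (hw : ∀ e ∈ E, 0 ≤ w e)
    (g : V → L) (hstable : IsStable E c w 2 1 g) :
    QLP E c w (toVec g) = Q E c w g ∧
    (∀ μ : V → L → ℝ, (∀ u, IsProbVec (μ u)) → QLP E c w (toVec g) ≤ QLP E c w μ) ∧
    (∀ μ : V → L → ℝ, (∀ u, IsProbVec (μ u)) → QLP E c w μ = QLP E c w (toVec g) →
      ∀ u, ∀ i, μ u i = 0 ∨ μ u i = 1) :=
  lp_tight_of_two_one_stable_general E c w hw g hstable
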